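/- arXiv:2601.00674 — 6 statements merged into one kernel-verified Lean document; each statement's English description precedes it below -/
import Mathlib

section
/- Let Δ₁, ..., Δ_r be a sequence of segments in ascending order. Suppose Δ_k and Δ_{k+1} are linked for some k. Then the sequence Δ₁, ..., Δ_{k−1}, Δ_k∪Δ_{k+1}, Δ_k∩Δ_{k+1}, Δ_{k+2}, ..., Δ_r (with the empty segment Δ_k∩Δ_{k+1} omitted if empty) is also in ascending order. -/
/-- Two segments `[a,b]`, `[a',b']` are linked if `a < a' ≤ b+1 ≤ b'` or
`a' < a ≤ b'+1 ≤ b`. -/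
def Linked (s t : ℤ × ℤ) : Prop :=
  (s.1 < t.1 ∧ t.1 ≤ s.2 + 1 ∧ s.2 + 1 ≤ t.2) ∨
  (t.1 < s.1 ∧ s.1 ≤ t.2 + 1 ∧ t.2 + 1 ≤ s.2)

/-- `s < t` for linked segments: `a < a' ≤ b+1 ≤ b'`. -/
def SegLT (s t : ℤ × ℤ) : Prop := s.1 < t.1 ∧ t.1 ≤ s.2 + 1 ∧ s.2 + 1 ≤ t.2

/-- A sequence of segments is in ascending order if for any `i ≤ j`, the `i`-th and
`j`-th segments are either unlinked or the `i`-th has strictly smaller left endpoint. -/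
def Ascending (l : List (ℤ × ℤ)) : Prop :=
  ∀ i j : ℕ, i ≤ j → j < l.length →
    ¬ Linked l[i]! l[j]! ∨ (l[i]!).1 < (l[j]!).1

def SegR (s t : ℤ × ℤ) : Prop := ¬ Linked s t ∨ s.1 < t.1

lemma ascending_iff_pairwise (l : List (ℤ × ℤ)) : Ascending l ↔ l.Pairwise SegR := by
  rw [List.pairwise_iff_getElem]
  constructor
  · intro h i j hi hj hij
    have := h i j hij.le hj
    rwa [getElem!_pos l i (by omega), getElem!_pos l j hj] at this
  · intro h i j hij hj
    rcases lt_or_eq_of_le hij with h' | h'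
    · have := h i j (by omega) hj h'
      rwa [getElem!_pos l i (by omega), getElem!_pos l j hj]
    · subst h'
      left
      rintro (⟨hh, _⟩ | ⟨hh, _⟩) <;> exact lt_irrefl _ hh

/-- If `Δ₁, ..., Δ_r` is ascending and `Δ_k`, `Δ_{k+1}` are linked (with
`Δ_k < Δ_{k+1}`), then replacing the pair `Δ_k, Δ_{k+1}` by the union
`Δ_k ∪ Δ_{k+1}` followed by the intersection `Δ_k ∩ Δ_{k+1}` (omitted if empty)
yields an ascending sequence. -/
theorem ascending_intersection_union (l1 l2 : List (ℤ × ℤ)) (Δ Δ' : ℤ × ℤ)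
    (hsegs : ∀ s ∈ l1 ++ Δ :: Δ' :: l2, s.1 ≤ s.2)
    (hlt : SegLT Δ Δ')
    (hasc : Ascending (l1 ++ Δ :: Δ' :: l2)) :
    Ascending (l1 ++ (Δ.1, Δ'.2) ::
      ((if Δ'.1 ≤ Δ.2 then [(Δ'.1, Δ.2)] else []) ++ l2)) := by
  rw [ascending_iff_pairwise] at hasc ⊢
  rw [List.pairwise_append] at hasc ⊢
  obtain ⟨h1, h2, h3⟩ := hasc
  rw [List.pairwise_cons] at h2
  obtain ⟨hD, h2⟩ := h2
  rw [List.pairwise_cons] at h2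
  obtain ⟨hD', hl2⟩ := h2
  have hDD' : SegR Δ Δ' := hD Δ' (by simp)
  have hDl2 : ∀ y ∈ l2, SegR Δ y := fun y hy => hD y (by simp [hy])
  refine ⟨h1, ?_, ?_⟩
  · rw [List.pairwise_cons]
    constructor
    · intro y hy
      rw [List.mem_append] at hy
      rcases hy with hy | hy
      · -- y is the intersection segment
        by_cases hI : Δ'.1 ≤ Δ.2
        · simp only [if_pos hI, List.mem_singleton] at hy
          subst hy
          simp only [SegR, Linked, SegLT] at *
          omega
        · simp [if_neg hI] at hy
      · -- y ∈ l2
        have hy1 := hDl2 y hy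
        have hy2 := hD' y hy
        simp only [SegR, Linked, SegLT] at *
        omega
    · rw [List.pairwise_append]
      refine ⟨?_, hl2, ?_⟩
      · by_cases hI : Δ'.1 ≤ Δ.2 <;> simp [if_pos, if_neg, hI]
      · intro x hx y hy
        by_cases hI : Δ'.1 ≤ Δ.2
        · simp only [if_pos hI, List.mem_singleton] at hx
          subst hx
          have hy1 := hDl2 y hy
          have hy2 := hD' y hy
          simp only [SegR, Linked, SegLT] at *
          omega
        · simp [if_neg hI] at hx
  · intro x hx y hy
    have hx1 : SegR x Δ := h3 x hx Δ (by simp)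
    have hx2 : SegR x Δ' := h3 x hx Δ' (by simp)
    rw [List.mem_cons, List.mem_append] at hy
    rcases hy with hy | hy | hy
    · subst hy
      simp only [SegR, Linked, SegLT] at *
      omega
    · by_cases hI : Δ'.1 ≤ Δ.2
      · simp only [if_pos hI, List.mem_singleton] at hy
        subst hy
        simp only [SegR, Linked, SegLT] at *
        omega
      · simp [if_neg hI] at hy
    · exact h3 x hx y (by simp [hy])
end

section
/- If a multisegment 𝔫 is obtained from a multisegment 𝔪 by a nonempty sequence of elementary intersection-union processes, then 𝔫 ≠ 𝔪. Consequently, the relation ≤_Z (defined by: 𝔫 ≤_Z 𝔪 iff 𝔫 is obtained from 𝔪 by a possibly empty sequence of elementary intersection-union processes) is a partial order on multisegments. -/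
/-- The multiset `{[x,y]}` if `x ≤ y`, empty otherwise. -/
def seg? (x y : ℤ) : Multiset (ℤ × ℤ) := if x ≤ y then {(x, y)} else 0

/-- `IUStep m n`: `n` is obtained from `m` by one elementary intersection-union
process: replace a linked pair `Δ < Δ'` in `m` by `Δ∪Δ'` and `Δ∩Δ'`
(dropping the intersection if empty). -/
def IUStep (m n : Multiset (ℤ × ℤ)) : Prop :=
  ∃ Δ Δ' : ℤ × ℤ, Δ ∈ m ∧ Δ' ∈ m.erase Δ ∧ SegLT Δ Δ' ∧
    n = ((m.erase Δ).erase Δ') + {(Δ.1, Δ'.2)} + seg? Δ'.1 Δ.2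

/-- `n ≤_Z m`: `n` is obtained from `m` by a (possibly empty) sequence of
elementary intersection-union processes. -/
def leZ (n m : Multiset (ℤ × ℤ)) : Prop := Relation.ReflTransGen IUStep m n

def sumSqLength (m : Multiset (ℤ × ℤ)) : ℤ := (m.map fun p => (p.2 - p.1 + 1) ^ 2).sum

lemma sumSqLength_add (m n : Multiset (ℤ × ℤ)) :
    sumSqLength (m + n) = sumSqLength m + sumSqLength n := by
  simp [sumSqLength]

lemma sumSqLength_singleton (p : ℤ × ℤ) : sumSqLength {p} = (p.2 - p.1 + 1) ^ 2 := by
  simp [sumSqLength]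

lemma sumSqLength_erase {p : ℤ × ℤ} {m : Multiset (ℤ × ℤ)} (h : p ∈ m) :
    sumSqLength m = (p.2 - p.1 + 1) ^ 2 + sumSqLength (m.erase p) := by
  rw [← sumSqLength_singleton, ← sumSqLength_add, Multiset.singleton_add, Multiset.cons_erase h]

/-- The empty intersection `x = y + 1` is dropped, but it has length `0` anyway. -/
lemma sumSqLength_seg?_of_le_add_one {x y : ℤ} (h : x ≤ y + 1) :
    sumSqLength (seg? x y) = (y - x + 1) ^ 2 := by
  unfold seg?
  split_ifs with hxy
  · exact sumSqLength_singleton (x, y)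
  · simp [sumSqLength, show x = y + 1 by omega]

lemma IUStep.sumSqLength_lt {m n : Multiset (ℤ × ℤ)} (h : IUStep m n) :
    sumSqLength m < sumSqLength n := by
  obtain ⟨Δ, Δ', hΔ, hΔ', ⟨h₁, h₂, h₃⟩, rfl⟩ := h
  rw [sumSqLength_erase hΔ, sumSqLength_erase hΔ', sumSqLength_add, sumSqLength_add,
    sumSqLength_singleton, sumSqLength_seg?_of_le_add_one h₂]
  nlinarith

lemma Relation.TransGen.sumSqLength_lt {m n : Multiset (ℤ × ℤ)} (h : TransGen IUStep m n) :
    sumSqLength m < sumSqLength n := by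
  induction h with
  | single h => exact h.sumSqLength_lt
  | tail _ h ih => exact ih.trans h.sumSqLength_lt

/-- A nonempty sequence of elementary intersection-union processes changes the
multisegment; consequently `≤_Z` is a partial order (reflexive, transitive and
antisymmetric) on multisegments. -/
theorem leZ_partialOrder :
    (∀ m n : Multiset (ℤ × ℤ), Relation.TransGen IUStep m n → n ≠ m) ∧
    (∀ m : Multiset (ℤ × ℤ), leZ m m) ∧
    (∀ a b c : Multiset (ℤ × ℤ), leZ a b → leZ b c → leZ a c) ∧
    (∀ a b : Multiset (ℤ × ℤ), leZ a b → leZ b a → a = b) := by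
  have acyclic (m n : Multiset (ℤ × ℤ)) (h : Relation.TransGen IUStep m n) : n ≠ m := by
    rintro rfl
    exact h.sumSqLength_lt.false
  refine ⟨acyclic, fun m => .refl, fun a b c hab hbc => hbc.trans hab, fun a b hab hba => ?_⟩
  obtain h | h := Relation.reflTransGen_iff_eq_or_transGen.mp hab
  · exact h
  · exact absurd rfl (acyclic b b (h.trans_left hba))
end

section
/- Let w be a permutation of {1,...,n} that is a minimal-length coset representative for S_n/(S_{n−i} × S_i), i.e. w is strictly increasing on {1,...,n−i} and strictly increasing on {n−i+1,...,n}. Let w' be another such minimal-length representative. Then the following are equivalent: (1) w' ≤ w in the Bruhat order on S_n; (2) w'(k) ≤ w(k) for all k = 1,...,n−i; (3) w'(k) ≥ w(k) for all k = n−i+1,...,n. -/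
/-- The length of a permutation: its number of inversions. -/
def invLen {n : ℕ} (w : Equiv.Perm (Fin n)) : ℕ :=
  (Finset.univ.filter (fun p : Fin n × Fin n => p.1 < p.2 ∧ w p.2 < w p.1)).card

/-- One step of the Bruhat order: `w'` is obtained from `w` by multiplication by a
transposition which decreases the length. -/
def BruhatStep {n : ℕ} (w w' : Equiv.Perm (Fin n)) : Prop :=
  ∃ i j : Fin n, i ≠ j ∧ w' = w * Equiv.swap i j ∧ invLen w' < invLen w

/-- Bruhat order: `w' ≤_B w` iff `w'` is obtained from `w` by a sequence of
multiplications by transpositions, each decreasing the length. -/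
def BruhatLE {n : ℕ} (w' w : Equiv.Perm (Fin n)) : Prop :=
  Relation.ReflTransGen BruhatStep w w'

/-- `w` is a minimal-length coset representative for `S_n/(S_{n-i} × S_i)`:
`w` is strictly increasing on the first `n - i` positions and strictly
increasing on the last `i` positions (positions are `0`-based). -/
def MinCosetRep {n : ℕ} (i : ℕ) (w : Equiv.Perm (Fin n)) : Prop :=
  (∀ k l : Fin n, (k : ℕ) < (l : ℕ) → (l : ℕ) < n - i → w k < w l) ∧
  (∀ k l : Fin n, (k : ℕ) < (l : ℕ) → n - i ≤ (k : ℕ) → w k < w l)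

/-!
Along a Bruhat step
`w ↦ w * swap i j` (`i < j`, `w j < w i`) the largest value on any prefix of positions can
only drop, and on the first block `w k` is the largest value on positions `≤ k`: (1) ⇒ (2).
Conversely, if `w' k < w k` at a first position `k` of the first block, the value just below
`w k` sits in the second block, and exchanging these two adjacent values is a Bruhat step down to
another minimal coset representative still above `w'`; induction on the length gives (2) ⇒ (1).
For (2) ⇔ (3): `w` and `w'` take equally many values `≥ v` overall. If `w' k < w k` at some `k`
of the second block, then, both being increasing there, `w` takes more values `≥ w k` than `w'`
on that block, hence fewer on the first block, against (2); (3) ⇒ (2) is the same argument with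
the blocks exchanged.
-/

open Finset Equiv

section Counting

variable {α β : Type*} [Fintype α]

theorem card_filter_compl_le_of_imp (f f' : α ≃ β) (s : Set α) [DecidablePred (· ∈ s)]
    (P : β → Prop) [DecidablePred P] (h : ∀ x ∈ s, P (f' x) → P (f x)) :
    #{x | x ∉ s ∧ P (f x)} ≤ #{x | x ∉ s ∧ P (f' x)} := by
  have hsplit (g : α → β) :
      #{x | x ∈ s ∧ P (g x)} + #{x | x ∉ s ∧ P (g x)} = #{x | P (g x)} := by
    rw [← card_filter_add_card_filter_not (s := {x | P (g x)}) (· ∈ s), filter_filter,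
      filter_filter]
    simp only [and_comm]
  have hcount : #{x | P (f x)} = #{x | P (f' x)} := card_equiv (f.trans f'.symm) (by simp)
  have hs : #{x | x ∈ s ∧ P (f' x)} ≤ #{x | x ∈ s ∧ P (f x)} :=
    card_le_card fun x hx => by
      simp only [mem_filter, mem_univ, true_and] at hx ⊢
      exact ⟨hx.1, h x hx.1 hx.2⟩
  have hf := hsplit f
  have hf' := hsplit f'
  omega

variable [LinearOrder α] [LinearOrder β]

theorem card_filter_apply_le_lt_of_lt {s : Set α} [DecidablePred (· ∈ s)] {f f' : α → β}
    (hf : StrictMonoOn f s) (hf' : StrictMonoOn f' s) {k : α} (hk : k ∈ s) (hlt : f' k < f k) :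
    #{x | x ∈ s ∧ f k ≤ f' x} < #{x | x ∈ s ∧ f k ≤ f x} :=
  calc #{x | x ∈ s ∧ f k ≤ f' x}
      ≤ #{x | x ∈ s ∧ k < x} := card_le_card fun x hx => by
        simp only [mem_filter, mem_univ, true_and] at hx ⊢
        refine ⟨hx.1, lt_of_not_ge fun hxk => ?_⟩
        exact (hx.2.trans (hf'.monotoneOn hx.1 hk hxk)).not_gt hlt
    _ < #{x | x ∈ s ∧ k ≤ x} := card_lt_card <| (ssubset_iff_of_subset fun x hx => by
          simp only [mem_filter, mem_univ, true_and] at hx ⊢; exact ⟨hx.1, hx.2.le⟩).2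
        ⟨k, by simp [hk], by simp⟩
    _ ≤ #{x | x ∈ s ∧ f k ≤ f x} := card_le_card fun x hx => by
        simp only [mem_filter, mem_univ, true_and] at hx ⊢
        exact ⟨hx.1, hf.monotoneOn hk hx.1 hx.2⟩

theorem apply_le_on_compl_of_le_on (f f' : α ≃ β) (s : Set α) [DecidablePred (· ∈ s)]
    (hf : StrictMonoOn f sᶜ) (hf' : StrictMonoOn f' sᶜ) (h : ∀ x ∈ s, f' x ≤ f x) :
    ∀ k ∉ s, f k ≤ f' k := by
  intro k hk
  by_contra! hlt
  have hlt := card_filter_apply_le_lt_of_lt hf hf' hk hlt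
  have hle := card_filter_compl_le_of_imp f f' s (f k ≤ ·) fun x hx hfx => hfx.trans (h x hx)
  simp only [Set.mem_compl_iff] at hlt
  omega

end Counting

theorem Equiv.swap_apply_lt_swap_apply {α : Type*} [LinearOrder α] {u v a b : α} (huv : u ⋖ v)
    (hab : a < b) (hne : ¬(a = u ∧ b = v)) : swap u v a < swap u v b := by
  have := huv.1
  have := huv.2
  simp only [swap_apply_def]
  grind

section Bruhat

variable {n : ℕ}

theorem invLen_mul_swap_lt (w : Perm (Fin n)) {i j : Fin n} (hij : i < j) (hw : w j < w i) :
    invLen (w * swap i j) < invLen w := by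
  set σ := swap i j
  calc invLen (w * σ)
      ≤ #(({p : Fin n × Fin n | p.1 < p.2 ∧ w p.2 < w p.1} : Finset _).erase (i, j)) := by
        -- an inversion `(p, q)` of `w * σ` goes to `(σ p, σ q)` if that pair is increasing;
        -- otherwise `σ` reverses `p < q`, which forces `p = i` or `q = j` and keeps `(p, q)`
        -- an inversion of `w`
        refine card_le_card_of_injOn
          (fun p => if σ p.1 < σ p.2 then (σ p.1, σ p.2) else p) ?_ ?_
        · intro p hp
          simp only [coe_filter, mem_univ, true_and, Set.mem_ofPred_eq, coe_erase, Set.mem_sdiff,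
            Set.mem_singleton_iff, Perm.mul_apply, σ, swap_apply_def] at hp ⊢
          grind
        · intro p hp q hq h
          simp only [Perm.mul_apply, σ, swap_apply_def] at hp hq h
          grind
    _ < invLen w := card_erase_lt_of_mem (by simp [hij, hw])

theorem BruhatStep.invLen_lt {w w₁ : Perm (Fin n)} (h : BruhatStep w w₁) :
    invLen w₁ < invLen w := by
  obtain ⟨-, -, -, -, hlt⟩ := h
  exact hlt

theorem BruhatStep.exists_lt {w w₁ : Perm (Fin n)} (h : BruhatStep w w₁) :
    ∃ i j, i < j ∧ w j < w i ∧ w₁ = w * swap i j := by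
  obtain ⟨i, j, hne, rfl, hlen⟩ := h
  wlog hij : i < j generalizing i j
  · obtain ⟨a, b, hab, hw, heq⟩ := this j i hne.symm (by rwa [swap_comm])
      (lt_of_le_of_ne (not_lt.1 hij) hne.symm)
    exact ⟨a, b, hab, hw, by rw [swap_comm, heq]⟩
  refine ⟨i, j, hij, lt_of_not_ge fun hle => ?_, rfl⟩
  have hgrow := invLen_mul_swap_lt (w * swap i j) hij
    (by simpa using lt_of_le_of_ne hle (w.injective.ne hne))
  rw [mul_swap_mul_self] at hgrow
  omega

theorem BruhatStep.exists_le_apply {w w₁ : Perm (Fin n)} (h : BruhatStep w w₁) {a k : Fin n}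
    (hak : a ≤ k) : ∃ b ≤ k, w₁ a ≤ w b := by
  obtain ⟨i, j, hij, hw, rfl⟩ := h.exists_lt
  by_cases hσ : swap i j a ≤ k
  · exact ⟨swap i j a, hσ, le_rfl⟩
  -- `swap i j` moved `a ≤ k` beyond `k`, so `a = i`, and `w₁ a = w j < w i`
  · refine ⟨i, ?_, ?_⟩ <;> simp only [Perm.mul_apply, swap_apply_def] at hσ ⊢ <;> grind

theorem BruhatLE.exists_le_apply {w w' : Perm (Fin n)} (h : BruhatLE w' w) {a k : Fin n}
    (hak : a ≤ k) : ∃ b ≤ k, w' a ≤ w b := by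
  induction h generalizing a with
  | refl => exact ⟨a, hak, le_rfl⟩
  | tail _ hstep ih =>
    obtain ⟨b, hbk, hb⟩ := hstep.exists_le_apply hak
    obtain ⟨c, hck, hc⟩ := ih hbk
    exact ⟨c, hck, hb.trans hc⟩

end Bruhat

namespace MinCosetRep

variable {n i : ℕ} {w w' : Perm (Fin n)}

theorem strictMonoOn_fst (hw : MinCosetRep i w) : StrictMonoOn w {k | (k : ℕ) < n - i} :=
  fun _ _ _ hl hkl => hw.1 _ _ hkl hl

theorem strictMonoOn_snd (hw : MinCosetRep i w) : StrictMonoOn w {k | n - i ≤ (k : ℕ)} :=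
  fun _ hk _ _ hkl => hw.2 _ _ hkl hk

theorem le_snd_of_le_fst (hw : MinCosetRep i w) (hw' : MinCosetRep i w')
    (h : ∀ k : Fin n, (k : ℕ) < n - i → w' k ≤ w k) :
    ∀ k : Fin n, n - i ≤ (k : ℕ) → w k ≤ w' k :=
  fun k hk => apply_le_on_compl_of_le_on w w' {k | (k : ℕ) < n - i}
    (by simpa only [Set.compl_ofPred, not_lt] using hw.strictMonoOn_snd)
    (by simpa only [Set.compl_ofPred, not_lt] using hw'.strictMonoOn_snd) h k (not_lt.2 hk)

theorem le_fst_of_le_snd (hw : MinCosetRep i w) (hw' : MinCosetRep i w')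
    (h : ∀ k : Fin n, n - i ≤ (k : ℕ) → w k ≤ w' k) :
    ∀ k : Fin n, (k : ℕ) < n - i → w' k ≤ w k :=
  fun k hk => apply_le_on_compl_of_le_on w' w {k | n - i ≤ (k : ℕ)}
    (by simpa only [Set.compl_ofPred, not_le] using hw'.strictMonoOn_fst)
    (by simpa only [Set.compl_ofPred, not_le] using hw.strictMonoOn_fst) h k (not_le.2 hk)

theorem apply_le_of_bruhatLE (hw : MinCosetRep i w) (h : BruhatLE w' w) {k : Fin n}
    (hk : (k : ℕ) < n - i) : w' k ≤ w k := by
  obtain ⟨b, hbk, hb⟩ := h.exists_le_apply le_rfl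
  exact hb.trans (hw.strictMonoOn_fst.monotoneOn ((Fin.le_def.1 hbk).trans_lt hk) hk hbk)

/-- `w * swap k m` exchanges the adjacent values `w m ⋖ w k`, which reverses no comparison
inside a block. -/
theorem mul_swap (hw : MinCosetRep i w) {k m : Fin n} (hk : (k : ℕ) < n - i)
    (hm : n - i ≤ (m : ℕ)) (hcov : w m ⋖ w k) : MinCosetRep i (w * swap k m) := by
  have key : ∀ a b : Fin n, w a < w b → ¬(a = m ∧ b = k) →
      (w * swap k m) a < (w * swap k m) b := by
    intro a b hab hne
    rw [mul_swap_eq_swap_mul, swap_comm]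
    exact swap_apply_lt_swap_apply hcov hab fun h => hne ⟨w.injective h.1, w.injective h.2⟩
  constructor
  · intro a b hab hb
    exact key a b (hw.1 a b hab hb) fun h => by omega
  · intro a b hab ha
    exact key a b (hw.2 a b hab ha) fun h => by omega

theorem exists_bruhatStep (hw : MinCosetRep i w) (hw' : MinCosetRep i w')
    (hle : ∀ k : Fin n, (k : ℕ) < n - i → w' k ≤ w k)
    (hlt : ∃ k : Fin n, (k : ℕ) < n - i ∧ w' k < w k) :
    ∃ w₁, BruhatStep w w₁ ∧ MinCosetRep i w₁ ∧
      ∀ k : Fin n, (k : ℕ) < n - i → w' k ≤ w₁ k := by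
  obtain ⟨k, hkmin⟩ := exists_minimal_of_wellFoundedLT _ hlt
  obtain ⟨hk, hlt⟩ := hkmin.prop
  have heq : ∀ a < k, w a = w' a := fun a hak =>
    le_antisymm (not_lt.1 fun h => hkmin.not_prop_of_lt hak ⟨(Fin.lt_def.1 hak).trans hk, h⟩)
      (hle a ((Fin.lt_def.1 hak).trans hk))
  have hcov := Order.pred_covBy_of_not_isMin fun h : IsMin (w k) => h.not_lt hlt
  have hpred : w' k ≤ Order.pred (w k) := Order.le_pred_of_lt hlt
  set m := w.symm (Order.pred (w k))
  have hwm : w m = Order.pred (w k) := w.apply_symm_apply _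
  -- on the first block, values before `k` are those of `w'`, below `w' k ≤ pred (w k)`,
  -- and values after `k` exceed `w k`
  have hm : n - i ≤ (m : ℕ) := by
    by_contra! hm
    rcases lt_trichotomy m k with hmk | hmk | hkm
    · have := hw'.1 m k hmk hk
      rw [← heq m hmk, hwm] at this
      exact this.not_ge hpred
    · rw [hmk] at hwm
      exact hcov.lt.ne' hwm
    · exact (hw.1 k m hkm hm).not_gt (hwm ▸ hcov.lt)
  have hkm : k < m := Fin.lt_def.2 (by omega)
  refine ⟨w * swap k m, ⟨k, m, hkm.ne, rfl, invLen_mul_swap_lt w hkm (hwm ▸ hcov.lt)⟩,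
    hw.mul_swap hk hm (hwm ▸ hcov), fun a ha => ?_⟩
  rcases eq_or_ne a k with rfl | hak
  · simpa [hwm] using hpred
  · have ham : a ≠ m := fun h => by subst h; omega
    rw [Perm.mul_apply, swap_apply_of_ne_of_ne hak ham]
    exact hle a ha

theorem bruhatLE_of_apply_le {w w' : Perm (Fin n)} (hw : MinCosetRep i w)
    (hw' : MinCosetRep i w') (hle : ∀ k : Fin n, (k : ℕ) < n - i → w' k ≤ w k) :
    BruhatLE w' w := by
  by_cases hlt : ∃ k : Fin n, (k : ℕ) < n - i ∧ w' k < w k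
  · obtain ⟨w₁, hstep, hw₁, hle₁⟩ := exists_bruhatStep hw hw' hle hlt
    exact .head hstep (bruhatLE_of_apply_le hw₁ hw' hle₁)
  · simp only [not_exists, not_and, not_lt] at hlt
    have hfst : ∀ k : Fin n, (k : ℕ) < n - i → w' k = w k :=
      fun k hk => le_antisymm (hle k hk) (hlt k hk)
    obtain rfl : w' = w := Equiv.ext fun k =>
      (lt_or_ge (k : ℕ) (n - i)).elim (hfst k) fun hk => le_antisymm
        (hw'.le_snd_of_le_fst hw (fun k hk => (hfst k hk).ge) k hk)
        (hw.le_snd_of_le_fst hw' hle k hk)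
    exact .refl
termination_by invLen w
decreasing_by exact hstep.invLen_lt

end MinCosetRep

theorem bruhat_minCosetRep_criterion_general {n : ℕ} (i : ℕ)
    (w w' : Equiv.Perm (Fin n)) (hw : MinCosetRep i w) (hw' : MinCosetRep i w') :
    (BruhatLE w' w ↔ ∀ k : Fin n, (k : ℕ) < n - i → w' k ≤ w k) ∧
    (BruhatLE w' w ↔ ∀ k : Fin n, n - i ≤ (k : ℕ) → w k ≤ w' k) := by
  have h12 : BruhatLE w' w ↔ ∀ k : Fin n, (k : ℕ) < n - i → w' k ≤ w k :=
    ⟨fun h k hk => hw.apply_le_of_bruhatLE h hk, hw.bruhatLE_of_apply_le hw'⟩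
  exact ⟨h12, h12.trans ⟨hw.le_snd_of_le_fst hw', hw.le_fst_of_le_snd hw'⟩⟩

/-- For minimal coset representatives `w, w'` for `S_n/(S_{n-i} × S_i)`, the
following are equivalent: (1) `w' ≤_B w`; (2) `w'(k) ≤ w(k)` for all positions
`k` in the first block; (3) `w'(k) ≥ w(k)` for all positions `k` in the second
block. -/
theorem bruhat_minCosetRep_criterion {n : ℕ} (i : ℕ) (hi : i ≤ n)
    (w w' : Equiv.Perm (Fin n)) (hw : MinCosetRep i w) (hw' : MinCosetRep i w') :
    (BruhatLE w' w ↔ ∀ k : Fin n, (k : ℕ) < n - i → w' k ≤ w k) ∧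
    (BruhatLE w' w ↔ ∀ k : Fin n, n - i ≤ (k : ℕ) → w k ≤ w' k) :=
  bruhat_minCosetRep_criterion_general i w w' hw hw'
end

section
/- Let 𝔥 be a multisegment, Δ = [a,b] admissible to 𝔥, and let Δ₁ be the first segment of the removal sequence for (Δ,𝔥). Set 𝔥* = 𝔥 − Δ₁ + ⁻Δ₁, where ⁻[x,y] = [x+1,y] (dropped if empty). If a < b then ⁻Δ = [a+1,b] is admissible to 𝔥* and 𝔯(Δ, 𝔥) = 𝔯(⁻Δ, 𝔥*). -/
/-! Let `Δ₁ = [a,c]` and `𝔥* = 𝔥 - [a,c] + [a+1,c]`. After its first segment, a removal sequence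
only ever consults segments ending before `c`, and on those `𝔥` and `𝔥*` agree, so the two
removal sequences share their tail. If the second segment `Δ₂` of the sequence for `(Δ, 𝔥)` starts
at `a+1`, it is shorter than `[a+1,c]`, hence the first segment for `(⁻Δ, 𝔥*)`, and `[a+1,c]`
reappears in `𝔯(Δ, 𝔥)` as the truncation `Δ₁^{tr} = [a(Δ₂), c]`. Otherwise `[a+1,c]` is the first
segment for `(⁻Δ, 𝔥*)`; it has the same candidates for the next segment as `[a,c]`, so the new
sequence is `[a+1,c], Δ₂, …` and has the same truncations as the old one. -/

/-- `s ≺^L t`: compare left endpoints first, then right endpoints. -/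
def precL (s t : ℤ × ℤ) : Prop := s.1 < t.1 ∨ (s.1 = t.1 ∧ s.2 < t.2)

/-- `Δ = [a,b]` is admissible to the multisegment `h`: `h` contains a segment
`[a,c]` with `c ≥ b`. -/
def Admissible (a b : ℤ) (h : Multiset (ℤ × ℤ)) : Prop := ∃ c : ℤ, (a, c) ∈ h ∧ b ≤ c

/-- `L = [Δ₁, ..., Δ_r]` is the removal sequence for `(Δ, h)`, `Δ = [a,b]`:
`Δ₁` is the shortest segment of `h` with left endpoint `a` and right endpoint `≥ b`;
recursively, `Δ_{i+1}` is the `≺^L`-minimal segment of `h` with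
`a(Δ_i) < a(Δ_{i+1})` and `b ≤ b(Δ_{i+1}) < b(Δ_i)`; the process stops when no
such segment exists. -/
def IsRemovalSeq (a b : ℤ) (h : Multiset (ℤ × ℤ)) (L : List (ℤ × ℤ)) : Prop :=
  L ≠ [] ∧
  ((L[0]!).1 = a ∧ L[0]! ∈ h ∧ b ≤ (L[0]!).2 ∧
    ∀ c : ℤ, (a, c) ∈ h → b ≤ c → (L[0]!).2 ≤ c) ∧
  (∀ i : ℕ, i + 1 < L.length →
    L[i+1]! ∈ h ∧ (L[i]!).1 < (L[i+1]!).1 ∧ b ≤ (L[i+1]!).2 ∧ (L[i+1]!).2 < (L[i]!).2 ∧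
    ∀ s ∈ h, (L[i]!).1 < s.1 → b ≤ s.2 → s.2 < (L[i]!).2 → ¬ precL s (L[i+1]!)) ∧
  (∀ s ∈ h, ¬ ((L[L.length - 1]!).1 < s.1 ∧ b ≤ s.2 ∧ s.2 < (L[L.length - 1]!).2))

/-- `𝔯(Δ, h)` computed from the removal sequence `L = [Δ₁,...,Δ_r]` for
`(Δ, h)`, `Δ = [a,b]`: remove the `Δ_i` from `h` and add the truncated segments
`Δ_i^{tr} = [a(Δ_{i+1}), b(Δ_i)]` for `i < r` and `Δ_r^{tr} = [b(Δ_r)+1, b]`,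
dropping empty segments. -/
def removalResult (b : ℤ) (h : Multiset (ℤ × ℤ)) (L : List (ℤ × ℤ)) : Multiset (ℤ × ℤ) :=
  (h - (L : Multiset (ℤ × ℤ))) +
    (Finset.range (L.length - 1)).sum (fun i => seg? ((L[i+1]!).1) ((L[i]!).2)) +
    seg? ((L[L.length - 1]!).2 + 1) b

theorem eq_of_not_precL_of_not_precL {s t : ℤ × ℤ} (hst : ¬ precL s t) (hts : ¬ precL t s) :
    s = t := by
  simp only [precL, not_or, not_and, not_lt] at hst hts
  have h1 : s.1 = t.1 := le_antisymm hts.1 hst.1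
  exact Prod.ext h1 (le_antisymm (hts.2 h1.symm) (hst.2 h1))

theorem seg?_of_le {x y : ℤ} (hxy : x ≤ y) : seg? x y = {(x, y)} := if_pos hxy

theorem Multiset.add_singleton_sub_of_notMem {α : Type*} [DecidableEq α] {n : α}
    {T : Multiset α} (hn : n ∉ T) (u : Multiset α) : (u + {n}) - T = u - T + {n} := by
  ext z
  have := Multiset.count_eq_zero.mpr hn
  by_cases hz : z = n
  · subst hz
    simp only [Multiset.count_sub, Multiset.count_add, this]
    omega
  · simp only [Multiset.count_sub, Multiset.count_add, Multiset.count_singleton, if_neg hz]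
    omega

theorem Multiset.mem_erase_add_singleton_iff {α : Type*} [DecidableEq α] {s x n : α}
    {h : Multiset α} (hx : s ≠ x) (hn : s ≠ n) : s ∈ h.erase x + {n} ↔ s ∈ h := by
  rw [Multiset.mem_add, Multiset.mem_erase_of_ne hx, Multiset.mem_singleton, or_iff_left hn]

def IsNextCandidate (b : ℤ) (h : Multiset (ℤ × ℤ)) (x s : ℤ × ℤ) : Prop :=
  s ∈ h ∧ x.1 < s.1 ∧ b ≤ s.2 ∧ s.2 < x.2

def IsRemovalHead (a b : ℤ) (h : Multiset (ℤ × ℤ)) (x : ℤ × ℤ) : Prop :=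
  x.1 = a ∧ x ∈ h ∧ b ≤ x.2 ∧ ∀ c : ℤ, (a, c) ∈ h → b ≤ c → x.2 ≤ c

def IsRemovalTail (b : ℤ) (h : Multiset (ℤ × ℤ)) : ℤ × ℤ → List (ℤ × ℤ) → Prop
  | x, [] => ∀ s, ¬ IsNextCandidate b h x s
  | x, y :: T => IsNextCandidate b h x y ∧ (∀ s, IsNextCandidate b h x s → ¬ precL s y) ∧
      IsRemovalTail b h y T

def truncations (b : ℤ) : ℤ × ℤ → List (ℤ × ℤ) → Multiset (ℤ × ℤ)
  | x, [] => seg? (x.2 + 1) b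
  | x, y :: T => seg? y.1 x.2 + truncations b y T

theorem isRemovalTail_iff_getElem! (b : ℤ) (h : Multiset (ℤ × ℤ)) (x : ℤ × ℤ) (T : List (ℤ × ℤ)) :
    ((∀ i : ℕ, i + 1 < (x :: T).length →
      (x :: T)[i+1]! ∈ h ∧ ((x :: T)[i]!).1 < ((x :: T)[i+1]!).1 ∧ b ≤ ((x :: T)[i+1]!).2 ∧
        ((x :: T)[i+1]!).2 < ((x :: T)[i]!).2 ∧
      ∀ s ∈ h, ((x :: T)[i]!).1 < s.1 → b ≤ s.2 → s.2 < ((x :: T)[i]!).2 →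
        ¬ precL s ((x :: T)[i+1]!)) ∧
    (∀ s ∈ h, ¬ (((x :: T)[(x :: T).length - 1]!).1 < s.1 ∧ b ≤ s.2 ∧
        s.2 < ((x :: T)[(x :: T).length - 1]!).2))) ↔ IsRemovalTail b h x T := by
  induction T generalizing x with
  | nil => simp [IsRemovalTail, IsNextCandidate]
  | cons y T ih =>
    rw [IsRemovalTail, ← ih]
    simp only [List.length_cons, Nat.add_lt_add_iff_right, Nat.forall_lt_succ_left]
    simp only [List.getElem!_cons_succ, List.getElem!_cons_zero, Nat.add_sub_cancel,
      IsNextCandidate, and_imp, and_assoc]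

theorem isRemovalSeq_cons_iff {a b : ℤ} {h : Multiset (ℤ × ℤ)} {x : ℤ × ℤ} {T : List (ℤ × ℤ)} :
    IsRemovalSeq a b h (x :: T) ↔ IsRemovalHead a b h x ∧ IsRemovalTail b h x T := by
  rw [IsRemovalSeq, ← isRemovalTail_iff_getElem!]
  simp only [ne_eq, reduceCtorEq, not_false_eq_true, List.getElem!_cons_zero, true_and,
    IsRemovalHead]

theorem removalResult_cons (b : ℤ) (h : Multiset (ℤ × ℤ)) (x : ℤ × ℤ) (T : List (ℤ × ℤ)) :
    removalResult b h (x :: T) = h - ↑(x :: T) + truncations b x T := by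
  suffices ∀ x : ℤ × ℤ, (Finset.range T.length).sum
      (fun i => seg? (((x :: T)[i+1]!).1) (((x :: T)[i]!).2)) + seg? (((x :: T)[T.length]!).2 + 1) b
      = truncations b x T by
    simp only [removalResult, List.length_cons, Nat.add_sub_cancel, add_assoc, this]
  induction T with
  | nil => simp [truncations]
  | cons y T ih =>
    intro x
    simp only [List.length_cons, Finset.sum_range_succ', List.getElem!_cons_succ,
      List.getElem!_cons_zero, truncations, ← ih y]
    abel

theorem IsRemovalHead.unique {a b : ℤ} {h : Multiset (ℤ × ℤ)} {x y : ℤ × ℤ}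
    (hx : IsRemovalHead a b h x) (hy : IsRemovalHead a b h y) : x = y := by
  obtain ⟨hx1, hxh, hbx, hxmin⟩ := hx
  obtain ⟨hy1, hyh, hby, hymin⟩ := hy
  have hx' : (a, x.2) ∈ h := hx1 ▸ hxh
  have hy' : (a, y.2) ∈ h := hy1 ▸ hyh
  exact Prod.ext (hx1.trans hy1.symm) (le_antisymm (hxmin _ hy' hby) (hymin _ hx' hbx))

theorem IsNextCandidate.iff_of_mem_iff {b : ℤ} {h h' : Multiset (ℤ × ℤ)} {x : ℤ × ℤ}
    (hmem : ∀ s : ℤ × ℤ, s.2 < x.2 → (s ∈ h ↔ s ∈ h')) (s : ℤ × ℤ) :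
    IsNextCandidate b h x s ↔ IsNextCandidate b h' x s := by
  constructor <;> rintro ⟨hs, hrest⟩
  exacts [⟨(hmem s hrest.2.2).mp hs, hrest⟩, ⟨(hmem s hrest.2.2).mpr hs, hrest⟩]

namespace IsRemovalTail

variable {b : ℤ} {h : Multiset (ℤ × ℤ)}

theorem unique {x : ℤ × ℤ} {T T' : List (ℤ × ℤ)} (hT : IsRemovalTail b h x T)
    (hT' : IsRemovalTail b h x T') : T = T' := by
  induction T generalizing x T' with
  | nil =>
    cases T' with
    | nil => rfl
    | cons y' T' => exact absurd hT'.1 (hT y')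
  | cons y T ih =>
    cases T' with
    | nil => exact absurd hT.1 (hT' y)
    | cons y' T' =>
      obtain ⟨hy, hymin, hT⟩ := hT
      obtain ⟨hy', hymin', hT'⟩ := hT'
      obtain rfl : y = y' := eq_of_not_precL_of_not_precL (hymin' y hy) (hymin y' hy')
      rw [ih hT hT']

theorem snd_lt {x : ℤ × ℤ} {T : List (ℤ × ℤ)} (hT : IsRemovalTail b h x T) :
    ∀ y ∈ T, y.2 < x.2 := by
  induction T generalizing x with
  | nil => simp
  | cons y T ih =>
    obtain ⟨hy, -, hT⟩ := hT
    intro z hz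
    rcases List.mem_cons.mp hz with rfl | hz
    · exact hy.2.2.2
    · exact (ih hT z hz).trans hy.2.2.2

theorem exists_cons_not_precL {x s : ℤ × ℤ} {T : List (ℤ × ℤ)} (hT : IsRemovalTail b h x T)
    (hs : IsNextCandidate b h x s) : ∃ y T', T = y :: T' ∧ ¬ precL s y := by
  cases T with
  | nil => exact absurd hs (hT s)
  | cons y T' => exact ⟨y, T', rfl, hT.2.1 s hs⟩

theorem congr {h' : Multiset (ℤ × ℤ)} {x x' : ℤ × ℤ} {T : List (ℤ × ℤ)}
    (hT : IsRemovalTail b h x T)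
    (hcand : ∀ s, IsNextCandidate b h x s ↔ IsNextCandidate b h' x' s)
    (hmem : ∀ s : ℤ × ℤ, s.2 < x.2 → (s ∈ h ↔ s ∈ h')) : IsRemovalTail b h' x' T := by
  induction T generalizing x x' with
  | nil => exact fun s hs => hT s ((hcand s).mpr hs)
  | cons y T ih =>
    obtain ⟨hy, hymin, hT⟩ := hT
    have hmem_y : ∀ s : ℤ × ℤ, s.2 < y.2 → (s ∈ h ↔ s ∈ h') :=
      fun s hs => hmem s (hs.trans hy.2.2.2)
    exact ⟨(hcand y).mp hy, fun s hs => hymin s ((hcand s).mpr hs),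
      ih hT (IsNextCandidate.iff_of_mem_iff hmem_y) hmem_y⟩

end IsRemovalTail

theorem IsRemovalSeq.unique {a b : ℤ} {h : Multiset (ℤ × ℤ)} {L L' : List (ℤ × ℤ)}
    (hL : IsRemovalSeq a b h L) (hL' : IsRemovalSeq a b h L') : L = L' := by
  obtain ⟨x, T, rfl⟩ := List.exists_cons_of_ne_nil hL.1
  obtain ⟨x', T', rfl⟩ := List.exists_cons_of_ne_nil hL'.1
  obtain ⟨hx, hT⟩ := isRemovalSeq_cons_iff.mp hL
  obtain ⟨hx', hT'⟩ := isRemovalSeq_cons_iff.mp hL'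
  obtain rfl := hx.unique hx'
  rw [hT.unique hT']

section TruncateFirst

variable {a b c : ℤ} {h : Multiset (ℤ × ℤ)}

theorem mem_erase_add_singleton_iff_of_snd_lt {a' : ℤ} {s : ℤ × ℤ} (hs : s.2 < c) :
    s ∈ h.erase (a, c) + {(a', c)} ↔ s ∈ h :=
  Multiset.mem_erase_add_singleton_iff (ne_of_apply_ne Prod.snd hs.ne)
    (ne_of_apply_ne Prod.snd hs.ne)

theorem isRemovalSeq_erase_add_of_fst_eq {y : ℤ × ℤ} {T : List (ℤ × ℤ)}
    (hT : IsRemovalTail b h (a, c) (y :: T)) (hy : y.1 = a + 1) :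
    IsRemovalSeq (a + 1) b (h.erase (a, c) + {(a + 1, c)}) (y :: T) := by
  obtain ⟨hy_cand, hy_min, hT⟩ := hT
  have hyc : y.2 < c := hy_cand.2.2.2
  have hmem : ∀ s : ℤ × ℤ, s.2 < y.2 → (s ∈ h ↔ s ∈ h.erase (a, c) + {(a + 1, c)}) :=
    fun s hs => (mem_erase_add_singleton_iff_of_snd_lt (hs.trans hyc)).symm
  refine isRemovalSeq_cons_iff.mpr ⟨⟨hy, ?_, hy_cand.2.2.1, fun c' hc' hbc' => ?_⟩,
    hT.congr (IsNextCandidate.iff_of_mem_iff hmem) hmem⟩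
  · exact (mem_erase_add_singleton_iff_of_snd_lt hyc).mpr hy_cand.1
  · by_cases hc'c : c' < c
    · have hc'h := (mem_erase_add_singleton_iff_of_snd_lt (a' := a + 1) hc'c).mp hc'
      have := hy_min (a + 1, c') ⟨hc'h, lt_add_one a, hbc', hc'c⟩
      simp only [precL, hy, lt_irrefl, true_and, false_or, not_lt] at this
      exact this
    · exact hyc.le.trans (not_lt.mp hc'c)

theorem removalResult_erase_add_of_fst_eq (hac : a + 1 ≤ c) {y : ℤ × ℤ} {T : List (ℤ × ℤ)}
    (hT : IsRemovalTail b h (a, c) (y :: T)) (hy : y.1 = a + 1) :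
    removalResult b (h.erase (a, c) + {(a + 1, c)}) (y :: T) =
      removalResult b h ((a, c) :: y :: T) := by
  have hn : ((a + 1, c) : ℤ × ℤ) ∉ ((y :: T : List (ℤ × ℤ)) : Multiset (ℤ × ℤ)) :=
    fun hmem => (hT.snd_lt _ (Multiset.mem_coe.mp hmem)).false
  rw [removalResult_cons, removalResult_cons, truncations, hy, seg?_of_le hac,
    Multiset.add_singleton_sub_of_notMem hn, ← Multiset.cons_coe (a, c), Multiset.sub_cons,
    add_assoc]

theorem isRemovalSeq_erase_add_of_fst_ne (hbc : b ≤ c) {T : List (ℤ × ℤ)}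
    (hT : IsRemovalTail b h (a, c) T) (hT_head : ∀ y T', T = y :: T' → y.1 ≠ a + 1) :
    IsRemovalSeq (a + 1) b (h.erase (a, c) + {(a + 1, c)}) ((a + 1, c) :: T) := by
  have hcand_fst : ∀ s, IsNextCandidate b h (a, c) s → s.1 ≠ a + 1 := by
    intro s hs hs1
    obtain ⟨y, T', rfl, hsy⟩ := hT.exists_cons_not_precL hs
    have hay : a < y.1 := hT.1.2.1
    simp only [precL, hs1, not_or, not_lt, not_and] at hsy
    exact hT_head y T' rfl (le_antisymm hsy.1 hay)
  have hmem : ∀ s : ℤ × ℤ, s.2 < c → (s ∈ h ↔ s ∈ h.erase (a, c) + {(a + 1, c)}) :=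
    fun s hs => (mem_erase_add_singleton_iff_of_snd_lt hs).symm
  refine isRemovalSeq_cons_iff.mpr ⟨⟨rfl, by simp, hbc, fun c' hc' hbc' => ?_⟩,
    hT.congr (fun s => ?_) hmem⟩
  · by_contra! hc'c
    have hc'h := (mem_erase_add_singleton_iff_of_snd_lt (a' := a + 1) hc'c).mp hc'
    exact hcand_fst _ ⟨hc'h, lt_add_one a, hbc', hc'c⟩ rfl
  · rw [← IsNextCandidate.iff_of_mem_iff (x := (a + 1, c)) hmem]
    simp only [IsNextCandidate]
    constructor
    · rintro ⟨hs, has, hrest⟩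
      exact ⟨hs, lt_of_le_of_ne has (hcand_fst s ⟨hs, has, hrest⟩).symm, hrest⟩
    · rintro ⟨hs, has, hrest⟩
      exact ⟨hs, (lt_add_one a).trans has, hrest⟩

theorem removalResult_erase_add_of_fst_ne {T : List (ℤ × ℤ)} :
    removalResult b (h.erase (a, c) + {(a + 1, c)}) ((a + 1, c) :: T) =
      removalResult b h ((a, c) :: T) := by
  have htr : truncations b (a + 1, c) T = truncations b (a, c) T := by cases T <;> rfl
  rw [removalResult_cons, removalResult_cons, htr, ← Multiset.cons_coe, ← Multiset.cons_coe,
    Multiset.sub_cons, Multiset.sub_cons,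
    Multiset.erase_add_right_pos _ (Multiset.mem_singleton_self _), Multiset.erase_singleton,
    add_zero]

end TruncateFirst

theorem removal_truncate_first_general (h : Multiset (ℤ × ℤ)) (a b : ℤ)
    (hab : a < b) (L : List (ℤ × ℤ)) (hL : IsRemovalSeq a b h L) :
    Admissible (a + 1) b (h.erase L[0]! + seg? ((L[0]!).1 + 1) ((L[0]!).2)) ∧
    ∀ L' : List (ℤ × ℤ),
      IsRemovalSeq (a + 1) b (h.erase L[0]! + seg? ((L[0]!).1 + 1) ((L[0]!).2)) L' →
      removalResult b (h.erase L[0]! + seg? ((L[0]!).1 + 1) ((L[0]!).2)) L' =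
        removalResult b h L := by
  obtain ⟨x, T, rfl⟩ := List.exists_cons_of_ne_nil hL.1
  obtain ⟨hx, hT⟩ := isRemovalSeq_cons_iff.mp hL
  obtain ⟨c, rfl⟩ : ∃ c, x = (a, c) := ⟨x.2, Prod.ext hx.1 rfl⟩
  have hbc : b ≤ c := hx.2.2.1
  simp only [List.getElem!_cons_zero, seg?_of_le (by omega : a + 1 ≤ c)]
  refine ⟨⟨c, by simp, hbc⟩, fun L' hL' => ?_⟩
  obtain ⟨L'', hL'', hres⟩ : ∃ L'', IsRemovalSeq (a + 1) b (h.erase (a, c) + {(a + 1, c)}) L'' ∧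
      removalResult b (h.erase (a, c) + {(a + 1, c)}) L'' = removalResult b h ((a, c) :: T) := by
    by_cases hT_head : ∃ y T', T = y :: T' ∧ y.1 = a + 1
    · obtain ⟨y, T', rfl, hy⟩ := hT_head
      exact ⟨_, isRemovalSeq_erase_add_of_fst_eq hT hy,
        removalResult_erase_add_of_fst_eq (by omega) hT hy⟩
    · push Not at hT_head
      exact ⟨_, isRemovalSeq_erase_add_of_fst_ne hbc hT hT_head, removalResult_erase_add_of_fst_ne⟩
  rw [hL'.unique hL'', hres]

/-- Let `Δ = [a,b]` be admissible to `𝔥` with removal sequence starting at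
`Δ₁ = Υ(Δ,𝔥)`, and let `𝔥* = 𝔥 − Δ₁ + ⁻Δ₁` where `⁻[x,y] = [x+1,y]` (dropped if
empty). If `a < b`, then `⁻Δ = [a+1,b]` is admissible to `𝔥*` and
`𝔯(Δ, 𝔥) = 𝔯(⁻Δ, 𝔥*)`. -/
theorem removal_truncate_first (h : Multiset (ℤ × ℤ)) (a b : ℤ)
    (hab : a < b) (hsegs : ∀ s ∈ h, s.1 ≤ s.2) (hadm : Admissible a b h)
    (L : List (ℤ × ℤ)) (hL : IsRemovalSeq a b h L) :
    Admissible (a + 1) b (h.erase L[0]! + seg? ((L[0]!).1 + 1) ((L[0]!).2)) ∧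
    ∀ L' : List (ℤ × ℤ),
      IsRemovalSeq (a + 1) b (h.erase L[0]! + seg? ((L[0]!).1 + 1) ((L[0]!).2)) L' →
      removalResult b (h.erase L[0]! + seg? ((L[0]!).1 + 1) ((L[0]!).2)) L' =
        removalResult b h L :=
  removal_truncate_first_general h a b hab L hL
end

section
/- Let Δ₁ < Δ₂ be linked segments, and let Δ' be a segment with a(Δ₁) ≤ a(Δ') ≤ a(Δ₂) and b(Δ₁) ≤ b(Δ') ≤ b(Δ₂), linked to Δ_i for some i ∈ {1,2}. Let j be the other index. Then {Δ₁∩Δ₂, Δ₁∪Δ₂, Δ'} ≤_Z {Δ_i∩Δ', Δ_i∪Δ', Δ_j} ≤_Z {Δ₁, Δ₂, Δ'} in the Zelevinsky order on multisegments (empty intersections being dropped from the multisets). -/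
def Consecutive (m : Multiset (ℤ × ℤ)) (Δ Δ' : ℤ × ℤ) : Prop :=
  Δ ∈ m ∧ Δ' ∈ m.erase Δ ∧ SegLT Δ Δ' ∧
  ∀ Δ'' ∈ (m.erase Δ).erase Δ',
    ¬(Δ.1 ≤ Δ''.1 ∧ Δ''.1 ≤ Δ'.1 ∧ Δ.2 ≤ Δ''.2 ∧ Δ''.2 ≤ Δ'.2 ∧
      (Linked Δ'' Δ ∨ Linked Δ'' Δ'))

lemma seg?_pos {x y : ℤ} (h : x ≤ y) : seg? x y = {(x, y)} := if_pos h

lemma iu_step (p q r s : ℤ) (rest m n : Multiset (ℤ × ℤ))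
    (h1 : p < r) (h2 : r ≤ q + 1) (h3 : q + 1 ≤ s)
    (hm : m = {(p, q)} + {(r, s)} + rest)
    (hn : n = rest + {(p, s)} + seg? r q) :
    IUStep m n := by
  have hc : m = (p, q) ::ₘ (r, s) ::ₘ rest := by
    rw [hm, add_assoc, Multiset.singleton_add, Multiset.singleton_add]
  refine ⟨(p, q), (r, s), ?_, ?_, ⟨h1, h2, h3⟩, ?_⟩
  · rw [hc]; exact Multiset.mem_cons_self _ _
  · rw [hc, Multiset.erase_cons_head]; exact Multiset.mem_cons_self _ _
  · rw [hc, Multiset.erase_cons_head, Multiset.erase_cons_head]; exact hn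

lemma leZ_eq {m n : Multiset (ℤ × ℤ)} (h : n = m) : leZ n m := h ▸ Relation.ReflTransGen.refl
lemma leZ_one {m n : Multiset (ℤ × ℤ)} (h : IUStep m n) : leZ n m := Relation.ReflTransGen.single h
lemma leZ_two {m k n : Multiset (ℤ × ℤ)} (h1 : IUStep m k) (h2 : IUStep k n) : leZ n m :=
  Relation.ReflTransGen.head h1 (Relation.ReflTransGen.single h2)

/-- Let `Δ₁ < Δ₂` be linked segments and `Δ'` a segment with
`a(Δ₁) ≤ a(Δ') ≤ a(Δ₂)` and `b(Δ₁) ≤ b(Δ') ≤ b(Δ₂)`, linked to `Δᵢ` for some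
`i ∈ {1,2}` (with `Δⱼ` the other one). Then
`{Δ₁∩Δ₂, Δ₁∪Δ₂, Δ'} ≤_Z {Δᵢ∩Δ', Δᵢ∪Δ', Δⱼ} ≤_Z {Δ₁, Δ₂, Δ'}` in the Zelevinsky
order (empty intersections being dropped). -/
theorem consecutive_sandwich (Δ₁ Δ₂ Δ' Δi Δj : ℤ × ℤ)
    (hΔ' : Δ'.1 ≤ Δ'.2)
    (h12 : SegLT Δ₁ Δ₂)
    (hbounds : Δ₁.1 ≤ Δ'.1 ∧ Δ'.1 ≤ Δ₂.1 ∧ Δ₁.2 ≤ Δ'.2 ∧ Δ'.2 ≤ Δ₂.2)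
    (hij : (Δi = Δ₁ ∧ Δj = Δ₂) ∨ (Δi = Δ₂ ∧ Δj = Δ₁))
    (hlink : Linked Δi Δ') :
    leZ (seg? Δ₂.1 Δ₁.2 + {(Δ₁.1, Δ₂.2)} + {Δ'})
        ({(min Δi.1 Δ'.1, max Δi.2 Δ'.2)} +
          seg? (max Δi.1 Δ'.1) (min Δi.2 Δ'.2) + {Δj}) ∧
    leZ ({(min Δi.1 Δ'.1, max Δi.2 Δ'.2)} +
          seg? (max Δi.1 Δ'.1) (min Δi.2 Δ'.2) + {Δj})
        ({Δ₁} + {Δ₂} + {Δ'}) := by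
  obtain ⟨a1, b1⟩ := Δ₁
  obtain ⟨a2, b2⟩ := Δ₂
  obtain ⟨a', b'⟩ := Δ'
  obtain ⟨h1, h2, h3⟩ := h12
  obtain ⟨hb1, hb2, hb3, hb4⟩ := hbounds
  simp only at hΔ' h1 h2 h3 hb1 hb2 hb3 hb4 ⊢
  rcases hij with ⟨hi, hj⟩ | ⟨hi, hj⟩ <;> subst hi hj
  · -- i = 1 : Δi = (a1,b1), Δj = (a2,b2)
    have hl : a1 < a' ∧ a' ≤ b1 + 1 ∧ b1 + 1 ≤ b' := by
      rcases hlink with h | h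
      · exact h
      · exact absurd h.1 (not_lt.mpr hb1)
    obtain ⟨l1, l2, l3⟩ := hl
    rw [show min (a1, b1).1 (a', b').1 = a1 from min_eq_left l1.le,
        show max (a1, b1).2 (a', b').2 = b' from max_eq_right (by omega),
        show max (a1, b1).1 (a', b').1 = a' from max_eq_right l1.le,
        show min (a1, b1).2 (a', b').2 = b1 from min_eq_left (by omega)]
    constructor
    · rcases eq_or_lt_of_le hb2 with ha | ha
      · subst ha
        rcases eq_or_lt_of_le hb4 with hb | hb
        · subst hb
          exact leZ_eq (by ac_rfl)
        · refine leZ_one (iu_step a1 b' a' b2 (seg? a' b1) _ _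
            h1 (by omega) (by omega) (by ac_rfl) ?_)
          rw [seg?_pos hΔ']; try ac_rfl
      · rcases eq_or_lt_of_le hb4 with hb | hb
        · subst hb
          refine leZ_one (iu_step a' b1 a2 b' {(a1, b')} _ _
            ha (by omega) (by omega) ?_ (by ac_rfl))
          rw [seg?_pos (by omega : a' ≤ b1)]; ac_rfl
        · refine leZ_two (iu_step a1 b' a2 b2 {(a', b1)} _
            ({(a', b1)} + {(a1, b2)} + {(a2, b')})
            h1 (by omega) (by omega) ?_ ?_)
            (iu_step a' b1 a2 b' {(a1, b2)} _ _
            ha (by omega) (by omega) (by ac_rfl) (by ac_rfl))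
          · rw [seg?_pos (by omega : a' ≤ b1)]; ac_rfl
          · rw [seg?_pos (by omega : a2 ≤ b')]
    · exact leZ_one (iu_step a1 b1 a' b' {(a2, b2)} _ _
        l1 (by omega) (by omega) (by ac_rfl) (by ac_rfl))
  · -- i = 2 : Δi = (a2,b2), Δj = (a1,b1)
    have hl : a' < a2 ∧ a2 ≤ b' + 1 ∧ b' + 1 ≤ b2 := by
      rcases hlink with h | h
      · exact absurd h.1 (not_lt.mpr hb2)
      · exact h
    obtain ⟨l1, l2, l3⟩ := hl
    rw [show min (a2, b2).1 (a', b').1 = a' from min_eq_right l1.le,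
        show max (a2, b2).2 (a', b').2 = b2 from max_eq_left (by omega),
        show max (a2, b2).1 (a', b').1 = a2 from max_eq_left l1.le,
        show min (a2, b2).2 (a', b').2 = b' from min_eq_right (by omega)]
    constructor
    · rcases eq_or_lt_of_le hb1 with ha | ha
      · subst ha
        rcases eq_or_lt_of_le hb3 with hb | hb
        · subst hb
          exact leZ_eq (by ac_rfl)
        · refine leZ_one (iu_step a1 b1 a2 b' {(a1, b2)} _ _
            h1 (by omega) (by omega) ?_ (by ac_rfl))
          rw [seg?_pos (by omega : a2 ≤ b')]; try ac_rfl
      · rcases eq_or_lt_of_le hb3 with hb | hb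
        · subst hb
          refine leZ_one (iu_step a1 b1 a' b2 (seg? a2 b1) _ _
            ha (by omega) (by omega) (by ac_rfl) ?_)
          rw [seg?_pos (by omega : a' ≤ b1)]; try ac_rfl
        · refine leZ_two (iu_step a1 b1 a' b2 {(a2, b')} _
            ({(a2, b')} + {(a1, b2)} + {(a', b1)})
            ha (by omega) (by omega) ?_ ?_)
            (iu_step a' b1 a2 b' {(a1, b2)} _ _
            l1 (by omega) (by omega) (by ac_rfl) (by ac_rfl))
          · rw [seg?_pos (by omega : a2 ≤ b')]; try ac_rfl
          · rw [seg?_pos (by omega : a' ≤ b1)]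
    · exact leZ_one (iu_step a' b' a2 b2 {(a1, b1)} _ _
        l1 (by omega) (by omega) (by ac_rfl) (by ac_rfl))
end

section
/- Let 𝔥 be a multisegment and let Δ, Δ' be segments admissible to 𝔥 with a(Δ) = a(Δ'), and such that Δ' is admissible to 𝔯(Δ,𝔥) and Δ is admissible to 𝔯(Δ',𝔥). Then Υ(Δ, 𝔥) + Υ(Δ', 𝔯(Δ, 𝔥)) = Υ(Δ', 𝔥) + Υ(Δ, 𝔯(Δ', 𝔥)) as multisets of segments. -/
theorem mem_seg? {p : ℤ × ℤ} {x y : ℤ} : p ∈ seg? x y ↔ p = (x, y) ∧ x ≤ y := by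
  unfold seg?
  split_ifs with hxy <;> simp [hxy]

section AdmissibleEnds

variable {α β : Type*} [LinearOrder β]

def admissibleEnds (s : Multiset (α × β)) (a : α) (b : β) : Set β := {c | (a, c) ∈ s ∧ b ≤ c}

theorem admissibleEnds_anti {s : Multiset (α × β)} {a : α} {b b' : β} (hbb : b ≤ b') :
    admissibleEnds s a b' ⊆ admissibleEnds s a b :=
  fun _ hc => ⟨hc.1, hbb.trans hc.2⟩

variable [DecidableEq α]

theorem admissibleEnds_erase_subset (s : Multiset (α × β)) (a : α) (b : β) (x : α × β) :
    admissibleEnds (s.erase x) a b ⊆ admissibleEnds s a b :=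
  fun _ hc => ⟨Multiset.mem_of_mem_erase hc.1, hc.2⟩

theorem mem_admissibleEnds_erase {s : Multiset (α × β)} {a : α} {b c c' : β}
    (hc : c ∈ admissibleEnds s a b) (hne : c ≠ c') : c ∈ admissibleEnds (s.erase (a, c')) a b :=
  ⟨(Multiset.mem_erase_of_ne (by simpa using hne)).2 hc.1, hc.2⟩

theorem isLeast_admissibleEnds_erase_of_le {s : Multiset (α × β)} {a : α} {b b' c₁ γ₁ δ δ' : β}
    (hbb : b ≤ b')
    (hc₁ : IsLeast (admissibleEnds s a b) c₁) (hγ₁ : IsLeast (admissibleEnds s a b') γ₁)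
    (hδ : IsLeast (admissibleEnds (s.erase (a, c₁)) a b') δ)
    (hδ' : IsLeast (admissibleEnds (s.erase (a, γ₁)) a b) δ') :
    (c₁ = γ₁ ∧ δ = δ') ∨ (c₁ = δ' ∧ δ = γ₁) := by
  rcases le_or_gt b' c₁ with hc₁b' | hc₁b'
  · have hc₁γ₁ : c₁ = γ₁ :=
      le_antisymm (hc₁.2 (admissibleEnds_anti hbb hγ₁.1)) (hγ₁.2 ⟨hc₁.1.1, hc₁b'⟩)
    subst hc₁γ₁
    have hδ'b' : b' ≤ δ' :=
      hc₁b'.trans (hc₁.2 (admissibleEnds_erase_subset s a b _ hδ'.1))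
    exact .inl ⟨rfl, le_antisymm (hδ.2 ⟨hδ'.1.1, hδ'b'⟩) (hδ'.2 (admissibleEnds_anti hbb hδ.1))⟩
  · have hγ₁c₁ : γ₁ ≠ c₁ := (hc₁b'.trans_le hγ₁.1.2).ne'
    refine .inr ⟨le_antisymm ?_ ?_, le_antisymm ?_ ?_⟩
    · exact hc₁.2 (admissibleEnds_erase_subset s a b _ hδ'.1)
    · exact hδ'.2 (mem_admissibleEnds_erase hc₁.1 hγ₁c₁.symm)
    · exact hδ.2 (mem_admissibleEnds_erase hγ₁.1 hγ₁c₁)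
    · exact hγ₁.2 (admissibleEnds_erase_subset s a b' _ hδ.1)

theorem isLeast_admissibleEnds_erase {s : Multiset (α × β)} {a : α} {b b' c₁ γ₁ δ δ' : β}
    (hc₁ : IsLeast (admissibleEnds s a b) c₁) (hγ₁ : IsLeast (admissibleEnds s a b') γ₁)
    (hδ : IsLeast (admissibleEnds (s.erase (a, c₁)) a b') δ)
    (hδ' : IsLeast (admissibleEnds (s.erase (a, γ₁)) a b) δ') :
    (c₁ = γ₁ ∧ δ = δ') ∨ (c₁ = δ' ∧ δ = γ₁) := by
  rcases le_total b b' with hbb | hbb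
  · exact isLeast_admissibleEnds_erase_of_le hbb hc₁ hγ₁ hδ hδ'
  · rcases isLeast_admissibleEnds_erase_of_le hbb hγ₁ hc₁ hδ' hδ with ⟨h₁, h₂⟩ | ⟨h₁, h₂⟩
    · exact .inl ⟨h₁.symm, h₂.symm⟩
    · exact .inr ⟨h₂.symm, h₁.symm⟩

end AdmissibleEnds

namespace IsRemovalSeq

variable {a b : ℤ} {h : Multiset (ℤ × ℤ)} {L : List (ℤ × ℤ)}

theorem head_eq (hL : IsRemovalSeq a b h L) : L[0]! = (a, (L[0]!).2) :=
  Prod.ext hL.2.1.1 rfl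

theorem isLeast_head (hL : IsRemovalSeq a b h L) : IsLeast (admissibleEnds h a b) (L[0]!).2 :=
  ⟨⟨hL.head_eq ▸ hL.2.1.2.1, hL.2.1.2.2.1⟩, fun c hc => hL.2.1.2.2.2 c hc.1 hc.2⟩

theorem le_fst (hL : IsRemovalSeq a b h L) : ∀ i < L.length, a ≤ (L[i]!).1
  | 0, _ => hL.2.1.1.ge
  | i + 1, hi => (hL.le_fst i (by omega)).trans (hL.2.2.1 i hi).2.1.le

theorem lt_fst_succ (hL : IsRemovalSeq a b h L) {i : ℕ} (hi : i + 1 < L.length) :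
    a < (L[i + 1]!).1 :=
  (hL.le_fst i (by omega)).trans_lt (hL.2.2.1 i hi).2.1

theorem le_snd (hL : IsRemovalSeq a b h L) : ∀ i < L.length, b ≤ (L[i]!).2
  | 0, _ => hL.2.1.2.2.1
  | i + 1, hi => (hL.2.2.1 i hi).2.2.1

theorem lt_fst_of_mem_tail (hL : IsRemovalSeq a b h L) {p : ℤ × ℤ} (hp : p ∈ L.tail) : a < p.1 := by
  obtain ⟨i, hi, rfl⟩ := List.mem_iff_getElem.1 hp
  have hi' : i + 1 < L.length := by simp at hi; omega
  simpa [getElem!_pos L (i + 1) hi'] using hL.lt_fst_succ hi'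

/-- Only the head of a removal sequence starts at `a`. -/
theorem mem_sub_iff (hL : IsRemovalSeq a b h L) (c : ℤ) :
    (a, c) ∈ h - ↑L ↔ (a, c) ∈ h.erase (a, (L[0]!).2) := by
  obtain ⟨x, t, rfl⟩ := List.exists_cons_of_ne_nil hL.1
  have hnt : (a, c) ∉ (t : Multiset (ℤ × ℤ)) := fun hmem =>
    (hL.lt_fst_of_mem_tail (p := (a, c)) (by simpa using hmem)).false
  rw [← hL.head_eq, ← Multiset.cons_coe, Multiset.sub_cons, Multiset.mem_sub,
    Multiset.count_eq_zero.2 hnt, Multiset.count_pos]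
  simp

theorem mem_removalResult_iff (hL : IsRemovalSeq a b h L) (c : ℤ) :
    (a, c) ∈ removalResult b h L ↔ (a, c) ∈ h.erase (a, (L[0]!).2) := by
  have hlast : b ≤ (L[L.length - 1]!).2 :=
    hL.le_snd _ (Nat.sub_lt (List.length_pos_iff.2 hL.1) one_pos)
  have hmid : (a, c) ∉ (Finset.range (L.length - 1)).sum
      (fun i => seg? (L[i + 1]!).1 (L[i]!).2) := by
    rw [Multiset.mem_sum]
    rintro ⟨i, hi, hmem⟩
    have hfst := congrArg Prod.fst (mem_seg?.1 hmem).1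
    have := hL.lt_fst_succ (i := i) (by simp at hi; omega)
    simp only at hfst
    omega
  have hend : (a, c) ∉ seg? ((L[L.length - 1]!).2 + 1) b := fun hmem => by
    have := (mem_seg?.1 hmem).2
    omega
  simp only [removalResult, Multiset.mem_add, hL.mem_sub_iff, hmid, hend, or_false]

theorem admissibleEnds_removalResult (hL : IsRemovalSeq a b h L) (b' : ℤ) :
    admissibleEnds (removalResult b h L) a b' = admissibleEnds (h.erase (a, (L[0]!).2)) a b' := by
  ext c
  exact and_congr_left' (hL.mem_removalResult_iff c)

end IsRemovalSeq

theorem upsilon_symmetry_general (h : Multiset (ℤ × ℤ)) (a b b' : ℤ)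
    (L M : List (ℤ × ℤ)) (hL : IsRemovalSeq a b h L) (hM : IsRemovalSeq a b' h M)
    (L2 M2 : List (ℤ × ℤ))
    (hL2 : IsRemovalSeq a b' (removalResult b h L) L2)
    (hM2 : IsRemovalSeq a b (removalResult b' h M) M2) :
    ({L[0]!} + {L2[0]!} : Multiset (ℤ × ℤ)) = {M[0]!} + {M2[0]!} := by
  have hδ := hL2.isLeast_head
  have hδ' := hM2.isLeast_head
  rw [hL.admissibleEnds_removalResult] at hδ
  rw [hM.admissibleEnds_removalResult] at hδ'
  rw [hL.head_eq, hM.head_eq, hL2.head_eq, hM2.head_eq]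
  rcases isLeast_admissibleEnds_erase hL.isLeast_head hM.isLeast_head hδ hδ' with
    ⟨hc, hδδ'⟩ | ⟨hc, hδγ⟩
  · rw [hc, hδδ']
  · rw [hc, hδγ, add_comm]

/-- (Lemma 8.10.) Let `Δ = [a,b]` and `Δ' = [a,b']` have the same left endpoint,
both admissible to `𝔥`, with `Δ'` admissible to `𝔯(Δ,𝔥)` and `Δ` admissible to
`𝔯(Δ',𝔥)`. Then `Υ(Δ, 𝔥) + Υ(Δ', 𝔯(Δ, 𝔥)) = Υ(Δ', 𝔥) + Υ(Δ, 𝔯(Δ', 𝔥))` as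
multisets of segments. -/
theorem upsilon_symmetry (h : Multiset (ℤ × ℤ)) (a b b' : ℤ)
    (hsegs : ∀ s ∈ h, s.1 ≤ s.2)
    (hadm : Admissible a b h) (hadm' : Admissible a b' h)
    (L M : List (ℤ × ℤ)) (hL : IsRemovalSeq a b h L) (hM : IsRemovalSeq a b' h M)
    (hadm2 : Admissible a b' (removalResult b h L))
    (hadm2' : Admissible a b (removalResult b' h M))
    (L2 M2 : List (ℤ × ℤ))
    (hL2 : IsRemovalSeq a b' (removalResult b h L) L2)
    (hM2 : IsRemovalSeq a b (removalResult b' h M) M2) :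
    ({L[0]!} + {L2[0]!} : Multiset (ℤ × ℤ)) = {M[0]!} + {M2[0]!} :=
  upsilon_symmetry_general h a b b' L M hL hM L2 M2 hL2 hM2
end
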